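/- At the stationary point (γ, ν) of the open Michaelis–Menten system with k0 < k2*eT, the Jacobian matrix has trace strictly negative and determinant strictly positive, hence the stationary point is linearly asymptotically stable. -/
import Mathlib


/-- At the stationary point `(γ, ν)` of the open Michaelis–Menten system,
the Jacobian has strictly negative trace and strictly positive determinant,
hence the stationary point is linearly asymptotically stable. -/
theorem open_mm_jacobian_stable
    (k0 k1 km1 k2 eT : ℝ)
    (hk0 : 0 < k0) (hk1 : 0 < k1) (hkm1 : 0 < km1) (hk2 : 0 < k2) (heT : 0 < eT)
    (hlt : k0 < k2 * eT)
    (α KM γ ν : ℝ)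
    (hα : α = k0 / (k2 * eT))
    (hKM : KM = (km1 + k2) / k1)
    (hγ : γ = α * KM / (1 - α))
    (hν : ν = α * eT)
    (J : Matrix (Fin 2) (Fin 2) ℝ)
    (hJ : J = !![-(k1 * (eT - ν)), k1 * γ + km1;
                 k1 * (eT - ν), -(k1 * γ + km1 + k2)]) :
    Matrix.trace J < 0 ∧ 0 < J.det := by
  have hα0 : 0 < α := by
    rw [hα]; positivity
  have hα1 : α < 1 := by
    rw [hα]; rw [div_lt_one (by positivity)]; exact hlt
  have hKM0 : 0 < KM := by rw [hKM]; positivity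
  have hγ0 : 0 < γ := by
    rw [hγ]
    have h1 : 0 < 1 - α := by linarith
    positivity
  have hν0 : 0 < eT - ν := by
    rw [hν]; nlinarith
  subst hJ
  constructor
  · rw [Matrix.trace_fin_two]
    simp
    nlinarith
  · rw [Matrix.det_fin_two]
    simp
    nlinarith [mul_pos (mul_pos hk1 hν0) hk2]
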